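/- The time-varying-delay modified wave variable transformation is passive: if û2(t) = g1(t) u1(t − T2(t)) and v̂1(t) = g2(t) v2(t − T1(t)) with g1²(t) ≤ 1 − T2'(t), g2²(t) ≤ 1 − T1'(t), T1'(t) ≤ 1, T2'(t) ≤ 1, and all signals vanish for negative time, then ∫_0^T û2ᵀû2 dt ≤ ∫_0^T u1ᵀu1 dt and ∫_0^T v̂1ᵀv̂1 dt ≤ ∫_0^T v2ᵀv2 dt for all T ≥ 0. -/

import Mathlib

/-!
Write `s t = t - τ t` for the delayed time. Since `0 ≤ g t ^ 2 ≤ 1 - τ' t = s' t`, the lag `s` is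
monotone and `‖g t • u (s t)‖ ^ 2 ≤ s' t * ‖u (s t)‖ ^ 2`. The change of variables `y = s t`
turns the integral of the right-hand side over `[0, b]` into the integral of `‖u‖ ^ 2` over
`[s 0, s b]`, and as `s t ≤ t` and `u` vanishes before time `0`, that is at most its integral
over `[0, b]`.
-/

open MeasureTheory Set

section Causal

variable {h : ℝ → ℝ} {a b c : ℝ}

lemma integrableOn_Icc_of_eq_zero_of_neg (h_neg : ∀ x < 0, h x = 0)
    (hint : IntegrableOn h (Icc 0 b)) : IntegrableOn h (Icc a b) := by
  have h_Iio : IntegrableOn h (Iio 0) :=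
    integrableOn_zero.congr_fun (fun x hx => (h_neg x hx).symm) measurableSet_Iio
  refine (h_Iio.union hint).mono_set fun x hx => ?_
  rcases lt_or_ge x 0 with hx0 | hx0
  exacts [Or.inl hx0, Or.inr ⟨hx0, hx.2⟩]

lemma setIntegral_Icc_le_of_eq_zero_of_neg (h_nonneg : ∀ x, 0 ≤ h x)
    (h_neg : ∀ x < 0, h x = 0) (hcb : c ≤ b) (hint : IntegrableOn h (Icc 0 b)) :
    ∫ x in Icc a c, h x ≤ ∫ x in Icc 0 b, h x := by
  calc ∫ x in Icc a c, h x = ∫ x in Icc a c ∩ Ici 0, h x :=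
        setIntegral_eq_of_subset_of_forall_sdiff_eq_zero measurableSet_Icc inter_subset_left
          fun x hx => h_neg x (not_le.1 fun hx0 => hx.2 ⟨hx.1, hx0⟩)
    _ ≤ ∫ x in Icc 0 b, h x :=
        setIntegral_mono_set hint (.of_forall h_nonneg)
          (.of_forall fun x hx => ⟨hx.2, hx.1.2.trans hcb⟩)

end Causal

section ChangeOfVariables

variable {f f' h : ℝ → ℝ} {b : ℝ}

lemma integrableOn_Icc_deriv_mul_comp_of_le_self (hf : ∀ x, HasDerivAt f (f' x) x)
    (hf' : ∀ x, 0 ≤ f' x) (hf_le : ∀ x, f x ≤ x) (h_neg : ∀ x < 0, h x = 0) (hb : 0 ≤ b)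
    (hint : IntegrableOn h (Icc 0 b)) :
    IntegrableOn (fun x => f' x * h (f x)) (Icc 0 b) :=
  (integrableOn_Icc_deriv_smul_iff_of_deriv_nonneg
    (fun x _ => (hf x).continuousAt.continuousWithinAt) (fun x _ => hf x) (fun x _ => hf' x) hb).2
    ((integrableOn_Icc_of_eq_zero_of_neg h_neg hint).mono_set (Icc_subset_Icc le_rfl (hf_le b)))

lemma setIntegral_Icc_deriv_mul_comp_le_of_le_self (hf : ∀ x, HasDerivAt f (f' x) x)
    (hf' : ∀ x, 0 ≤ f' x) (hf_le : ∀ x, f x ≤ x) (h_nonneg : ∀ x, 0 ≤ h x)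
    (h_neg : ∀ x < 0, h x = 0) (hb : 0 ≤ b) (hint : IntegrableOn h (Icc 0 b)) :
    ∫ x in Icc 0 b, f' x * h (f x) ≤ ∫ x in Icc 0 b, h x := by
  calc ∫ x in Icc 0 b, f' x * h (f x) = ∫ y in Icc (f 0) (f b), h y :=
        integral_Icc_deriv_smul_of_deriv_nonneg
          (fun x _ => (hf x).continuousAt.continuousWithinAt) (fun x _ => hf x)
          (fun x _ => hf' x) hb
    _ ≤ ∫ x in Icc 0 b, h x := setIntegral_Icc_le_of_eq_zero_of_neg h_nonneg h_neg (hf_le b) hint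

end ChangeOfVariables

theorem integral_norm_sq_smul_delayed_le {E : Type*} [NormedAddCommGroup E] [NormedSpace ℝ E]
    {τ τ' g : ℝ → ℝ} {u : ℝ → E} {b : ℝ} (hτ : ∀ t, HasDerivAt τ (τ' t) t)
    (hτ_nonneg : ∀ t, 0 ≤ τ t) (hg : ∀ t, g t ^ 2 ≤ 1 - τ' t) (hu : ∀ t < 0, u t = 0)
    (hb : 0 ≤ b) (hint : IntervalIntegrable (fun t => ‖u t‖ ^ 2) volume 0 b) :
    ∫ t in 0..b, ‖g t • u (t - τ t)‖ ^ 2 ≤ ∫ t in 0..b, ‖u t‖ ^ 2 := by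
  have h_lag : ∀ t, HasDerivAt (fun t => t - τ t) (1 - τ' t) t :=
    fun t => (hasDerivAt_id t).sub (hτ t)
  have h_lag_deriv_nonneg : ∀ t, 0 ≤ 1 - τ' t := fun t => (sq_nonneg _).trans (hg t)
  have h_lag_le : ∀ t, t - τ t ≤ t := fun t => sub_le_self _ (hτ_nonneg t)
  have h_neg : ∀ t < 0, ‖u t‖ ^ 2 = 0 := fun t ht => by simp [hu t ht]
  have hint' : IntegrableOn (fun t => ‖u t‖ ^ 2) (Icc 0 b) :=
    (intervalIntegrable_iff_integrableOn_Icc_of_le hb).1 hint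
  simp only [intervalIntegral.integral_of_le hb, ← integral_Icc_eq_integral_Ioc]
  calc ∫ t in Icc 0 b, ‖g t • u (t - τ t)‖ ^ 2
      ≤ ∫ t in Icc 0 b, (1 - τ' t) * ‖u (t - τ t)‖ ^ 2 := by
        refine integral_mono_of_nonneg (.of_forall fun t => by positivity)
          (integrableOn_Icc_deriv_mul_comp_of_le_self h_lag h_lag_deriv_nonneg h_lag_le h_neg hb
            hint')
          (.of_forall fun t => ?_)
        simp only [norm_smul, mul_pow, Real.norm_eq_abs, sq_abs]
        exact mul_le_mul_of_nonneg_right (hg t) (sq_nonneg _)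
    _ ≤ ∫ t in Icc 0 b, ‖u t‖ ^ 2 :=
        setIntegral_Icc_deriv_mul_comp_le_of_le_self h_lag h_lag_deriv_nonneg h_lag_le
          (fun t => sq_nonneg _) h_neg hb hint'

theorem wave_variable_time_varying_delay_passive_general
    {m : ℕ}
    (T1 T2 : ℝ → ℝ) (dT1 dT2 : ℝ → ℝ)
    (hT1nonneg : ∀ t, 0 ≤ T1 t) (hT2nonneg : ∀ t, 0 ≤ T2 t)
    (hT1deriv : ∀ t, HasDerivAt T1 (dT1 t) t)
    (hT2deriv : ∀ t, HasDerivAt T2 (dT2 t) t)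
    (g1 g2 : ℝ → ℝ)
    (hg1 : ∀ t, g1 t ^ 2 ≤ 1 - dT2 t)
    (hg2 : ∀ t, g2 t ^ 2 ≤ 1 - dT1 t)
    (u1 v2 u2hat v1hat : ℝ → EuclideanSpace ℝ (Fin m))
    (hu2hat : ∀ t, u2hat t = g1 t • u1 (t - T2 t))
    (hv1hat : ∀ t, v1hat t = g2 t • v2 (t - T1 t))
    (hu1zero : ∀ t < (0:ℝ), u1 t = 0)
    (hv2zero : ∀ t < (0:ℝ), v2 t = 0)
    (hu1int : ∀ T : ℝ, 0 ≤ T →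
      IntervalIntegrable (fun t => ‖u1 t‖ ^ 2) MeasureTheory.volume 0 T)
    (hv2int : ∀ T : ℝ, 0 ≤ T →
      IntervalIntegrable (fun t => ‖v2 t‖ ^ 2) MeasureTheory.volume 0 T) :
    ∀ T : ℝ, 0 ≤ T →
      (∫ t in (0:ℝ)..T, ‖u2hat t‖ ^ 2) ≤ (∫ t in (0:ℝ)..T, ‖u1 t‖ ^ 2) ∧
      (∫ t in (0:ℝ)..T, ‖v1hat t‖ ^ 2) ≤ (∫ t in (0:ℝ)..T, ‖v2 t‖ ^ 2) := by
  intro T hT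
  simp only [hu2hat, hv1hat]
  exact ⟨integral_norm_sq_smul_delayed_le hT2deriv hT2nonneg hg1 hu1zero hT (hu1int T hT),
    integral_norm_sq_smul_delayed_le hT1deriv hT1nonneg hg2 hv2zero hT (hv2int T hT)⟩

/-- The time-varying-delay modified wave variable transformation is passive:
if û2(t) = g1(t)·u1(t − T2(t)) and v̂1(t) = g2(t)·v2(t − T1(t)) with
g1² ≤ 1 − T2', g2² ≤ 1 − T1', T1' ≤ 1, T2' ≤ 1, and all signals vanish for
negative time, then ∫_0^T ‖û2‖² ≤ ∫_0^T ‖u1‖² and ∫_0^T ‖v̂1‖² ≤ ∫_0^T ‖v2‖². -/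
theorem wave_variable_time_varying_delay_passive
    {m : ℕ}
    (T1 T2 : ℝ → ℝ) (dT1 dT2 : ℝ → ℝ)
    (hT1nonneg : ∀ t, 0 ≤ T1 t) (hT2nonneg : ∀ t, 0 ≤ T2 t)
    (hT1deriv : ∀ t, HasDerivAt T1 (dT1 t) t)
    (hT2deriv : ∀ t, HasDerivAt T2 (dT2 t) t)
    (hdT1 : ∀ t, dT1 t ≤ 1) (hdT2 : ∀ t, dT2 t ≤ 1)
    (g1 g2 : ℝ → ℝ)
    (hg1 : ∀ t, g1 t ^ 2 ≤ 1 - dT2 t)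
    (hg2 : ∀ t, g2 t ^ 2 ≤ 1 - dT1 t)
    (u1 v2 u2hat v1hat : ℝ → EuclideanSpace ℝ (Fin m))
    (hu2hat : ∀ t, u2hat t = g1 t • u1 (t - T2 t))
    (hv1hat : ∀ t, v1hat t = g2 t • v2 (t - T1 t))
    (hu1zero : ∀ t < (0:ℝ), u1 t = 0)
    (hv2zero : ∀ t < (0:ℝ), v2 t = 0)
    (hu1int : ∀ T : ℝ, 0 ≤ T →
      IntervalIntegrable (fun t => ‖u1 t‖ ^ 2) MeasureTheory.volume 0 T)
    (hv2int : ∀ T : ℝ, 0 ≤ T →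
      IntervalIntegrable (fun t => ‖v2 t‖ ^ 2) MeasureTheory.volume 0 T)
    (hu2hatint : ∀ T : ℝ, 0 ≤ T →
      IntervalIntegrable (fun t => ‖u2hat t‖ ^ 2) MeasureTheory.volume 0 T)
    (hv1hatint : ∀ T : ℝ, 0 ≤ T →
      IntervalIntegrable (fun t => ‖v1hat t‖ ^ 2) MeasureTheory.volume 0 T) :
    ∀ T : ℝ, 0 ≤ T →
      (∫ t in (0:ℝ)..T, ‖u2hat t‖ ^ 2) ≤ (∫ t in (0:ℝ)..T, ‖u1 t‖ ^ 2) ∧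
      (∫ t in (0:ℝ)..T, ‖v1hat t‖ ^ 2) ≤ (∫ t in (0:ℝ)..T, ‖v2 t‖ ^ 2) :=
  wave_variable_time_varying_delay_passive_general T1 T2 dT1 dT2 hT1nonneg hT2nonneg hT1deriv
    hT2deriv g1 g2 hg1 hg2 u1 v2 u2hat v1hat hu2hat hv1hat hu1zero hv2zero hu1int hv2int
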